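/- Let E_t := 4·√(t(1−t)/(2π)). For every integer k ≥ 1 there exists a constant c_k > 0, depending only on k, such that the following holds: for all constants C, D > 0, every probability space (Ω, P) and every jointly measurable nonnegative process X : (0,1) × Ω → ℝ satisfying P(X(t,·) > x) ≤ (C/t)·exp(−D·x/√t) for all t ∈ (0,1) and all x > 0, one has E[ ( ∫₀¹ X(t, ·) · E_t dt )^k ] ≤ c_k · C · k! / D^k. In particular all moments of the least-square statistic λ̂[τ_n] of a conditioned Galton-Watson tree are bounded uniformly in n. -/

import Mathlib

/-!
Since `excMean ≤ 1`, the weight `excMean t dt` on `(0, 1)` has total mass at most one, so Jensen's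
inequality gives `(∫ X_t E_t dt)^k ≤ ∫ X_t^k E_t dt`, and by Tonelli it suffices to bound
`E_t · 𝔼[X_t^k]` uniformly in `t`. The layer-cake formula turns the tail bound into
`𝔼[X_t^k] ≤ (C / t) · k! · (√t / D)^k`, and `E_t ≤ 4 √t` absorbs the factor `1 / t`, leaving
`4 C k! / D^k`; so `c_k = 4` works.
-/

open MeasureTheory

/-- The mean of the Brownian excursion at time `t`. -/
noncomputable def excMean (t : ℝ) : ℝ := 4 * Real.sqrt (t * (1 - t) / (2 * Real.pi))

open Set ENNReal

section Integrals

variable {α : Type*} [MeasurableSpace α] {μ : Measure α}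

theorem ofReal_integral_le_lintegral_ofReal {f : α → ℝ} (hf : 0 ≤ᵐ[μ] f) :
    ENNReal.ofReal (∫ x, f x ∂μ) ≤ ∫⁻ x, ENNReal.ofReal (f x) ∂μ := by
  by_cases hint : Integrable f μ
  · exact (ofReal_integral_eq_lintegral_ofReal hint hf).le
  · simp [integral_undef hint]

/-- Jensen's inequality for `x ↦ x ^ p`, via Hölder's inequality against the constant `1`. -/
theorem rpow_lintegral_le_lintegral_rpow (hμ : μ univ ≤ 1) {f : α → ℝ≥0∞}
    (hf : AEMeasurable f μ) {p : ℝ} (hp : 1 ≤ p) :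
    (∫⁻ x, f x ∂μ) ^ p ≤ ∫⁻ x, f x ^ p ∂μ := by
  rcases hp.eq_or_lt with rfl | hp
  · simp
  have hpq := Real.HolderConjugate.conjExponent hp
  have holder := ENNReal.lintegral_mul_le_Lp_mul_Lq μ hpq hf aemeasurable_const (g := fun _ ↦ 1)
  simp only [Pi.mul_apply, mul_one, one_rpow, lintegral_one] at holder
  rw [← le_rpow_inv_iff (by linarith), ← one_div]
  calc ∫⁻ x, f x ∂μ ≤ _ := holder
    _ ≤ (∫⁻ x, f x ^ p ∂μ) ^ (1 / p) :=
      mul_le_of_le_one_right' (rpow_le_one hμ (by simpa using hpq.symm.nonneg))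

theorem rpow_lintegral_mul_le_lintegral_mul_rpow {w f : α → ℝ≥0∞} (hw : Measurable w)
    (hw_le : ∫⁻ x, w x ∂μ ≤ 1) (hf : Measurable f) {p : ℝ} (hp : 1 ≤ p) :
    (∫⁻ x, w x * f x ∂μ) ^ p ≤ ∫⁻ x, w x * f x ^ p ∂μ := by
  have hmass : μ.withDensity w univ ≤ 1 := by
    rwa [withDensity_apply _ MeasurableSet.univ, Measure.restrict_univ]
  have := rpow_lintegral_le_lintegral_rpow hmass hf.aemeasurable hp
  rwa [lintegral_withDensity_eq_lintegral_mul _ hw hf,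
    lintegral_withDensity_eq_lintegral_mul _ hw (hf.pow_const p)] at this

theorem ofReal_integral_mul_pow_le_lintegral_mul_pow {w f : α → ℝ} (hw : Measurable w)
    (hw0 : ∀ x, 0 ≤ w x) (hw_le : ∫⁻ x, ENNReal.ofReal (w x) ∂μ ≤ 1) (hf : Measurable f)
    (hf0 : ∀ x, 0 ≤ f x) {k : ℕ} (hk : 1 ≤ k) :
    ENNReal.ofReal ((∫ x, f x * w x ∂μ) ^ k) ≤
      ∫⁻ x, ENNReal.ofReal (w x) * ENNReal.ofReal (f x) ^ k ∂μ := by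
  have hfw : ∀ x, 0 ≤ f x * w x := fun x ↦ mul_nonneg (hf0 x) (hw0 x)
  have hjensen := rpow_lintegral_mul_le_lintegral_mul_rpow hw.ennreal_ofReal hw_le
    hf.ennreal_ofReal (p := k) (by exact_mod_cast hk)
  simp only [rpow_natCast] at hjensen
  rw [ofReal_pow (integral_nonneg hfw)]
  refine le_trans (pow_le_pow_left' ?_ k) hjensen
  refine (ofReal_integral_le_lintegral_ofReal (ae_of_all _ hfw)).trans_eq
    (lintegral_congr fun x ↦ ?_)
  rw [ofReal_mul (hf0 x), mul_comm]

theorem lintegral_rpow_le_of_meas_lt_le_exp {f : α → ℝ} (hf0 : 0 ≤ᵐ[μ] f)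
    (hf : AEMeasurable f μ) {A b p : ℝ} (hA : 0 ≤ A) (hb : 0 < b) (hp : 0 < p)
    (htail : ∀ x, 0 < x → μ {ω | x < f ω} ≤ ENNReal.ofReal (A * Real.exp (-(b * x)))) :
    ∫⁻ ω, ENNReal.ofReal (f ω ^ p) ∂μ ≤ ENNReal.ofReal (A * Real.Gamma (p + 1) / b ^ p) := by
  have hint : IntegrableOn (fun x : ℝ ↦ A * (x ^ (p - 1) * Real.exp (-(b * x)))) (Ioi 0) := by
    have h := integrableOn_rpow_mul_exp_neg_mul_rpow (s := p - 1) (by linarith) zero_lt_one hb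
    simp only [Real.rpow_one, neg_mul] at h
    exact h.const_mul A
  rw [lintegral_rpow_eq_lintegral_meas_lt_mul μ hf0 hf hp]
  calc ENNReal.ofReal p * ∫⁻ x in Ioi 0, μ {ω | x < f ω} * ENNReal.ofReal (x ^ (p - 1))
      ≤ ENNReal.ofReal p * ∫⁻ x in Ioi 0,
          ENNReal.ofReal (A * (x ^ (p - 1) * Real.exp (-(b * x)))) := by
        refine mul_le_mul_right (setLIntegral_mono' measurableSet_Ioi fun x hx ↦ ?_) _
        rw [mul_left_comm, mul_comm (x ^ (p - 1)), ofReal_mul (by positivity)]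
        exact mul_le_mul_left (htail x hx) _
    _ = ENNReal.ofReal (p * (A * ((1 / b) ^ p * Real.Gamma p))) := by
        rw [← ofReal_integral_eq_lintegral_ofReal hint, integral_const_mul,
          Real.integral_rpow_mul_exp_neg_mul_Ioi hp hb, ofReal_mul hp.le]
        exact ae_restrict_of_forall_mem measurableSet_Ioi fun x (hx : 0 < x) ↦ by positivity
    _ = ENNReal.ofReal (A * Real.Gamma (p + 1) / b ^ p) := by
        rw [Real.Gamma_add_one hp.ne', one_div, Real.inv_rpow hb.le]
        ring_nf

end Integrals

section ExcursionMean

theorem excMean_nonneg (t : ℝ) : 0 ≤ excMean t := by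
  unfold excMean; positivity

theorem measurable_excMean : Measurable excMean := by
  unfold excMean; fun_prop

theorem excMean_le_one (t : ℝ) : excMean t ≤ 1 := by
  have hvar : t * (1 - t) / (2 * Real.pi) ≤ (1 / 4) ^ 2 := by
    rw [div_le_iff₀ (by positivity)]
    nlinarith [Real.pi_gt_three, sq_nonneg (2 * t - 1)]
  have := Real.sqrt_le_sqrt hvar
  rw [Real.sqrt_sq (by norm_num)] at this
  unfold excMean
  linarith

theorem setLIntegral_Ioo_ofReal_excMean_le_one :
    ∫⁻ t in Ioo 0 1, ENNReal.ofReal (excMean t) ≤ 1 :=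
  calc _ ≤ ∫⁻ _ in Ioo (0 : ℝ) 1, 1 := lintegral_mono fun t ↦ ofReal_le_one.2 (excMean_le_one t)
    _ = 1 := by simp

theorem excMean_le_four_mul_sqrt {t : ℝ} (ht : 0 ≤ t) : excMean t ≤ 4 * Real.sqrt t := by
  have : t * (1 - t) / (2 * Real.pi) ≤ t := by
    rw [div_le_iff₀ (by positivity)]
    nlinarith [Real.pi_gt_three]
  unfold excMean
  gcongr

theorem excMean_mul_sqrt_pow_le {t : ℝ} (ht₀ : 0 ≤ t) (ht₁ : t ≤ 1) {k : ℕ} (hk : 1 ≤ k) :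
    excMean t * Real.sqrt t ^ k ≤ 4 * t := by
  obtain ⟨j, rfl⟩ := Nat.exists_eq_add_of_le' hk
  calc excMean t * Real.sqrt t ^ (j + 1) ≤ 4 * Real.sqrt t * Real.sqrt t ^ (j + 1) := by
        gcongr; exact excMean_le_four_mul_sqrt ht₀
    _ = 4 * t * Real.sqrt t ^ j := by
        linear_combination 4 * Real.sqrt t ^ j * Real.mul_self_sqrt ht₀
    _ ≤ 4 * t := by
        have : Real.sqrt t ^ j ≤ 1 := pow_le_one₀ (Real.sqrt_nonneg t) (Real.sqrt_le_one.2 ht₁)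
        nlinarith

end ExcursionMean

theorem ofReal_excMean_mul_lintegral_pow_le {Ω : Type*} [MeasurableSpace Ω] {P : Measure Ω}
    [IsFiniteMeasure P] {f : Ω → ℝ} (hf : Measurable f) (hf0 : ∀ ω, 0 ≤ f ω) {C D t : ℝ}
    (hC : 0 ≤ C) (hD : 0 < D) (ht : t ∈ Ioo 0 1) {k : ℕ} (hk : 1 ≤ k)
    (htail : ∀ x, 0 < x → (P {ω | f ω > x}).toReal ≤ C / t * Real.exp (-D * x / Real.sqrt t)) :
    ENNReal.ofReal (excMean t) * ∫⁻ ω, ENNReal.ofReal (f ω) ^ k ∂P ≤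
      ENNReal.ofReal (4 * C * k.factorial / D ^ k) := by
  have ht₀ : 0 < t := ht.1
  have hst : 0 < Real.sqrt t := Real.sqrt_pos.2 ht₀
  have hmoment := lintegral_rpow_le_of_meas_lt_le_exp (ae_of_all _ hf0) hf.aemeasurable
    (A := C / t) (b := D / Real.sqrt t) (p := k) (by positivity) (by positivity) (by positivity)
    fun x hx ↦ by
      rw [le_ofReal_iff_toReal_le (measure_ne_top P _) (by positivity)]
      convert htail x hx using 3
      ring
  simp only [Real.rpow_natCast, ofReal_pow (hf0 _), Real.Gamma_nat_eq_factorial, div_pow]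
    at hmoment
  have hweight := excMean_mul_sqrt_pow_le ht₀.le ht.2.le hk
  calc ENNReal.ofReal (excMean t) * ∫⁻ ω, ENNReal.ofReal (f ω) ^ k ∂P
      ≤ ENNReal.ofReal (excMean t) *
          ENNReal.ofReal (C / t * k.factorial / (D ^ k / Real.sqrt t ^ k)) := by gcongr
    _ = ENNReal.ofReal (C * k.factorial / D ^ k * (excMean t * Real.sqrt t ^ k) / t) := by
        rw [← ofReal_mul (excMean_nonneg t)]
        congr 1
        field_simp
    _ ≤ ENNReal.ofReal (C * k.factorial / D ^ k * (4 * t) / t) := by gcongr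
    _ = ENNReal.ofReal (4 * C * k.factorial / D ^ k) := by
        congr 1
        field_simp

theorem stmt_14 (k : ℕ) (hk : 1 ≤ k) :
    ∃ c : ℝ, 0 < c ∧
      ∀ (Ω : Type) (_ : MeasurableSpace Ω) (P : Measure Ω), IsProbabilityMeasure P →
      ∀ C D : ℝ, 0 < C → 0 < D →
      ∀ X : ℝ → Ω → ℝ, Measurable (fun p : ℝ × Ω => X p.1 p.2) →
      (∀ t ω, 0 ≤ X t ω) →
      (∀ t ∈ Set.Ioo (0 : ℝ) 1, ∀ x : ℝ, 0 < x →
        (P {ω | X t ω > x}).toReal ≤ (C / t) * Real.exp (-D * x / Real.sqrt t)) →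
      ∫ ω, (∫ t in (0 : ℝ)..1, X t ω * excMean t) ^ k ∂P ≤
        c * C * (Nat.factorial k : ℝ) / D ^ k := by
  refine ⟨4, by norm_num, fun Ω _ P _ C D hC hD X hX hX0 htail ↦ ?_⟩
  have hXt (t : ℝ) : Measurable (X t) := hX.comp measurable_prodMk_left
  have hbound : ∫⁻ ω, ENNReal.ofReal ((∫ t in (0 : ℝ)..1, X t ω * excMean t) ^ k) ∂P ≤
      ENNReal.ofReal (4 * C * k.factorial / D ^ k) :=
    calc _ ≤ ∫⁻ ω, (∫⁻ t in Ioo 0 1, ENNReal.ofReal (excMean t) * ENNReal.ofReal (X t ω) ^ k) ∂P :=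
          lintegral_mono fun ω ↦ by
            rw [intervalIntegral.integral_of_le zero_le_one, integral_Ioc_eq_integral_Ioo]
            exact ofReal_integral_mul_pow_le_lintegral_mul_pow measurable_excMean excMean_nonneg
              setLIntegral_Ioo_ofReal_excMean_le_one (hX.comp measurable_prodMk_right) (hX0 · ω) hk
      _ = ∫⁻ t in Ioo 0 1, ENNReal.ofReal (excMean t) * ∫⁻ ω, ENNReal.ofReal (X t ω) ^ k ∂P := by
          rw [lintegral_lintegral_swap ((measurable_excMean.comp measurable_snd).ennreal_ofReal.mul
            ((hX.comp measurable_swap).ennreal_ofReal.pow_const k)).aemeasurable]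
          exact lintegral_congr fun t ↦ lintegral_const_mul _ ((hXt t).ennreal_ofReal.pow_const k)
      _ ≤ ∫⁻ _ in Ioo (0 : ℝ) 1, ENNReal.ofReal (4 * C * k.factorial / D ^ k) :=
          setLIntegral_mono' measurableSet_Ioo fun t ht ↦ ofReal_excMean_mul_lintegral_pow_le
            (hXt t) (hX0 t) hC.le hD ht hk (htail t ht)
      _ = ENNReal.ofReal (4 * C * k.factorial / D ^ k) := by simp
  refine (ofReal_le_ofReal_iff (by positivity)).1
    ((ofReal_integral_le_lintegral_ofReal (ae_of_all _ fun ω ↦ ?_)).trans hbound)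
  exact pow_nonneg (intervalIntegral.integral_nonneg zero_le_one fun t _ ↦
    mul_nonneg (hX0 t ω) (excMean_nonneg t)) k
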